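/- Let M be a simple matroid, X a modular coatom of M, and e an element of the ground set not in X. Then χ(M, t) = (t - k) · χ(M|X, t), where k = |E \ X| is the number of elements outside X; in particular χ(M|X, t) divides χ(M, t). -/

import Mathlib

open scoped Classical Matroid

namespace Paper

variable {α : Type*}

/-- The rank of a set in a matroid: the maximum size of an independent subset. -/
noncomputable def mrk (M : Matroid α) (X : Set α) : ℕ :=
  sSup {n | ∃ I, M.Indep I ∧ I ⊆ X ∧ I.ncard = n}

/-- A circuit of a matroid: a minimal dependent subset of the ground set. -/
def Circuit (M : Matroid α) (C : Set α) : Prop :=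
  C ⊆ M.E ∧ ¬ M.Indep C ∧ ∀ D ⊂ C, M.Indep D

/-- A matroid is simple if every subset of the ground set with at most two
elements is independent. -/
def SimpleM (M : Matroid α) : Prop :=
  ∀ X ⊆ M.E, X.ncard ≤ 2 → M.Indep X

/-- A modular flat: a flat `X` with `r X + r Y = r (X ⊓ Y) + r (X ⊔ Y)` for every flat `Y`
(meet of flats is intersection; join is the closure of the union). -/
def ModularFlat (M : Matroid α) (X : Set α) : Prop :=
  M.IsFlat X ∧ ∀ Y, M.IsFlat Y →
    mrk M X + mrk M Y = mrk M (X ∩ Y) + mrk M (M.closure (X ∪ Y))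

/-- A matroid is round if its ground set is not the union of two proper flats. -/
def Round (M : Matroid α) : Prop :=
  ¬ ∃ F₁ F₂ : Set α, M.IsFlat F₁ ∧ M.IsFlat F₂ ∧ F₁ ≠ M.E ∧ F₂ ≠ M.E ∧ M.E = F₁ ∪ F₂

/-- Möbius function (measured from the bottom flat) on the lattice of flats of a matroid. -/
noncomputable def mob (M : Matroid α) [Fintype α] : Finset α → ℤ
  | F =>
    if (F : Set α) = M.closure ∅ then 1
    else - ∑ G ∈ (Finset.univ.powerset.filter
        (fun G : Finset α => M.IsFlat ↑G ∧ (G : Set α) ⊂ (F : Set α))).attach,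
        mob M G.1
termination_by F => F.card
decreasing_by
  · have hG := G.2
    simp only [Finset.mem_filter] at hG
    exact Finset.card_lt_card (Finset.coe_ssubset.mp hG.2.2)

/-- The characteristic polynomial `χ(M, t) = ∑_{F flat} μ(F) t^(r(M) - r(F))`. -/
noncomputable def charPoly (M : Matroid α) [Fintype α] : Polynomial ℤ :=
  ∑ F ∈ Finset.univ.powerset.filter (fun F : Finset α => M.IsFlat ↑F),
    Polynomial.C (mob M F) * Polynomial.X ^ (mrk M M.E - mrk M ↑F)

/-!
For a flat `F ⊄ X`, modularity of the coatom `X` gives `r F = r (X ∩ F) + 1`; consequently, for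
a flat `g ⊆ X` and a point `x ∉ X`, the flat `cl (g + x)` is the only flat through `x` that meets
`X` in `g`. So the sets `F \ X`, for `F ⊆ G` running over the flats with `X ∩ F = g`, partition
`G \ X`. With this count, `F ↦ -|F \ X| μ(X ∩ F)` satisfies the defining recursion of the Möbius
function on the flats not contained in `X` (at the atoms this needs simplicity: `|F \ X| = 1`),
whence `μ(F) = -|F \ X| μ(X ∩ F)`. In `χ(M)`, the flats inside `X` contribute `t χ(M|X)`, and
the flats outside `X`, grouped by their trace on `X`, contribute `-|E \ X| χ(M|X)`.
-/

open Set Matroid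

section Rank

variable {M : Matroid α} {X Y F G I : Set α} {e : α}

lemma cast_mrk (M : Matroid α) [M.RankFinite] (X : Set α) : (mrk M X : ℕ∞) = M.eRk X := by
  obtain ⟨I, hI⟩ := M.exists_isBasis' X
  have hmax : IsGreatest {n | ∃ J, M.Indep J ∧ J ⊆ X ∧ J.ncard = n} I.ncard := by
    refine ⟨⟨I, hI.indep, hI.subset, rfl⟩, ?_⟩
    rintro n ⟨J, hJ, hJX, rfl⟩
    have h := hJ.encard_le_eRk_of_subset hJX
    rw [← hI.encard_eq_eRk, ← hJ.finite.cast_ncard_eq, ← hI.indep.finite.cast_ncard_eq] at h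
    exact_mod_cast h
  rw [mrk, hmax.csSup_eq, hI.indep.finite.cast_ncard_eq, hI.encard_eq_eRk]

variable [M.RankFinite]

lemma mrk_mono (h : X ⊆ Y) : mrk M X ≤ mrk M Y := by
  have := M.eRk_mono h
  rwa [← cast_mrk, ← cast_mrk, Nat.cast_le] at this

lemma mrk_restrict {R : Set α} (h : X ⊆ R) : mrk (M ↾ R) X = mrk M X := by
  have := M.restrict_eRk_eq h
  rwa [← cast_mrk, ← cast_mrk, Nat.cast_inj] at this

lemma mrk_empty : mrk M ∅ = 0 := by
  have := M.eRk_empty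
  rwa [← cast_mrk, Nat.cast_eq_zero] at this

lemma _root_.Matroid.Indep.ncard_le_mrk (hI : M.Indep I) (hIX : I ⊆ X) :
    I.ncard ≤ mrk M X := by
  have := hI.encard_le_eRk_of_subset hIX
  rwa [← cast_mrk, ← hI.finite.cast_ncard_eq, Nat.cast_le] at this

lemma _root_.Matroid.IsFlat.eq_of_subset_of_mrk_le (hF : M.IsFlat F) (hG : M.IsFlat G)
    (hFG : F ⊆ G) (hr : mrk M G ≤ mrk M F) : F = G := by
  rw [← hF.closure, ← hG.closure]
  exact (M.isRkFinite_set F).closure_eq_closure_of_subset_of_eRk_ge_eRk hFG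
    (by rw [← cast_mrk, ← cast_mrk]; exact_mod_cast hr)

lemma _root_.Matroid.IsFlat.mrk_lt_of_ssubset (hF : M.IsFlat F) (hG : M.IsFlat G)
    (hFG : F ⊂ G) : mrk M F < mrk M G :=
  lt_of_le_of_ne' (mrk_mono hFG.subset) fun h ↦
    hFG.ne (hF.eq_of_subset_of_mrk_le hG hFG.subset h.le)

lemma _root_.Matroid.IsFlat.mrk_closure_insert (hF : M.IsFlat F) (he : e ∈ M.E \ F) :
    mrk M (M.closure (insert e F)) = mrk M F + 1 := by
  have := M.eRk_insert_eq_add_one (hF.closure.symm ▸ he)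
  rwa [← eRk_closure_eq, ← cast_mrk, ← cast_mrk, ← Nat.cast_add_one, Nat.cast_inj] at this

end Rank

section Flat

variable {M : Matroid α} {X F G : Set α}

lemma _root_.Matroid.IsFlat.inter (hF : M.IsFlat F) (hG : M.IsFlat G) : M.IsFlat (F ∩ G) := by
  rw [inter_eq_iInter]
  exact IsFlat.iInter fun b ↦ by cases b <;> assumption

lemma _root_.Matroid.IsFlat.closure_subset_of_subset (hF : M.IsFlat F) (hXF : X ⊆ F) :
    M.closure X ⊆ F :=
  (M.closure_subset_closure hXF).trans hF.closure.subset

lemma _root_.Matroid.IsFlat.restrict_closure_empty (hX : M.IsFlat X) :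
    (M ↾ X).closure ∅ = M.closure ∅ := by
  rw [restrict_closure_eq _ (empty_subset X) hX.subset_ground]
  exact inter_eq_left.2 (hX.closure_subset_of_subset (empty_subset X))

lemma isFlat_restrict_iff (hX : M.IsFlat X) : (M ↾ X).IsFlat F ↔ M.IsFlat F ∧ F ⊆ X := by
  refine ⟨fun hF ↦ ?_, fun ⟨hF, hFX⟩ ↦ ?_⟩
  · have hFX : F ⊆ X := hF.subset_ground
    have h := hF.closure
    rw [restrict_closure_eq _ hFX hX.subset_ground,
      inter_eq_left.2 (hX.closure_subset_of_subset hFX)] at h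
    exact ⟨isFlat_iff_closure_eq.2 h, hFX⟩
  · rw [isFlat_iff_closure_eq, restrict_closure_eq _ hFX hX.subset_ground, hF.closure,
      inter_eq_left.2 hFX]

end Flat

section Simple

variable {M : Matroid α} {F : Set α}

lemma SimpleM.closure_empty (hs : SimpleM M) : M.closure ∅ = ∅ := by
  have : M.Loopless := loopless_iff_forall_isNonloop.2 fun e he ↦
    indep_singleton.1 (hs {e} (singleton_subset_iff.2 he) (by simp))
  exact M.loops_eq_empty

lemma SimpleM.ncard_eq_one_of_mrk_eq_one [M.Finite] (hs : SimpleM M) (hF : F ⊆ M.E)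
    (hr : mrk M F = 1) : F.ncard = 1 := by
  have hfin : F.Finite := M.ground_finite.subset hF
  refine le_antisymm (not_lt.1 fun h ↦ ?_) ((ncard_pos hfin).2 ?_)
  · obtain ⟨a, b, ha, hb, hab⟩ := (one_lt_ncard_iff hfin).1 h
    have hind := hs {a, b} (pair_subset (hF ha) (hF hb)) (ncard_pair hab).le
    have := hind.ncard_le_mrk (pair_subset ha hb)
    rw [ncard_pair hab] at this
    omega
  · rw [nonempty_iff_ne_empty]
    rintro rfl
    rw [mrk_empty] at hr
    exact zero_ne_one hr

end Simple

section Mobius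

variable [Fintype α] {M : Matroid α} {X : Set α} {F : Finset α}

noncomputable def flats (M : Matroid α) : Finset (Finset α) :=
  Finset.univ.powerset.filter fun F : Finset α ↦ M.IsFlat ↑F

@[simp] lemma mem_flats : F ∈ flats M ↔ M.IsFlat ↑F := by
  simp [flats]

lemma mob_eq (M : Matroid α) (F : Finset α) :
    mob M F = if (F : Set α) = M.closure ∅ then 1
      else -∑ G ∈ flats M with G ⊂ F, mob M G := by
  rw [mob, Finset.sum_attach _ (mob M)]
  simp only [flats, Finset.filter_filter, Finset.coe_ssubset]

lemma sum_subflats_eq_add {R : Type*} [AddCommMonoid R] (f : Finset α → R)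
    (hF : M.IsFlat ↑F) :
    ∑ G ∈ flats M with G ⊆ F, f G = f F + ∑ G ∈ flats M with G ⊂ F, f G := by
  have : {G ∈ flats M | G ⊆ F} = insert F {G ∈ flats M | G ⊂ F} := by
    ext G
    simp only [Finset.mem_filter, Finset.mem_insert, subset_iff_ssubset_or_eq]
    aesop
  rw [this, Finset.sum_insert (by simp)]

lemma sum_mob_subflats (hF : M.IsFlat ↑F) :
    ∑ G ∈ flats M with G ⊆ F, mob M G = if (F : Set α) = M.closure ∅ then 1 else 0 := by
  rw [sum_subflats_eq_add _ hF, mob_eq]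
  split_ifs with h
  · refine add_eq_left.2 (Finset.sum_eq_zero fun G hG ↦ ?_)
    obtain ⟨hG, hGF⟩ := Finset.mem_filter.1 hG
    have hFG : (F : Set α) ⊆ G :=
      h ▸ (mem_flats.1 hG).closure_subset_of_subset (empty_subset _)
    exact absurd (Finset.coe_subset.1 hFG) (not_subset_of_ssubset hGF)
  · exact neg_add_cancel _

lemma eq_mob_of_sum_subflats {f : Finset α → ℤ} (hF : M.IsFlat ↑F)
    (hf : ∀ G : Finset α, M.IsFlat ↑G → G ⊆ F →
      ∑ H ∈ flats M with H ⊆ G, f H = if (G : Set α) = M.closure ∅ then 1 else 0) :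
    f F = mob M F := by
  induction F using Finset.strongInduction with
  | H F ih =>
  have hsum := hf F hF subset_rfl
  rw [← sum_mob_subflats hF, sum_subflats_eq_add _ hF, sum_subflats_eq_add _ hF] at hsum
  have hlower : ∑ G ∈ flats M with G ⊂ F, f G =
      ∑ G ∈ flats M with G ⊂ F, mob M G := by
    refine Finset.sum_congr rfl fun G hG ↦ ?_
    obtain ⟨hG, hGF⟩ := Finset.mem_filter.1 hG
    exact ih G hGF (mem_flats.1 hG) fun H hH hHG ↦ hf H hH (hHG.trans hGF.subset)
  linarith

lemma subflats_restrict (hX : M.IsFlat X) {G : Set α} (hGX : G ⊆ X) :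
    {H ∈ flats (M ↾ X) | ↑H ⊆ G} = {H ∈ flats M | ↑H ⊆ G} := by
  ext H
  simp only [Finset.mem_filter, mem_flats, isFlat_restrict_iff hX]
  exact ⟨fun h ↦ ⟨h.1.1, h.2⟩, fun h ↦ ⟨⟨h.1, h.2.trans hGX⟩, h.2⟩⟩

lemma mob_restrict (hX : M.IsFlat X) (hF : M.IsFlat ↑F) (hFX : ↑F ⊆ X) :
    mob (M ↾ X) F = mob M F := by
  refine eq_mob_of_sum_subflats hF fun G hG hGF ↦ ?_
  have hGX : ↑G ⊆ X := (Finset.coe_subset.2 hGF).trans hFX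
  have hsub := subflats_restrict hX hGX
  simp only [Finset.coe_subset] at hsub
  rw [← hsub, sum_mob_subflats ((isFlat_restrict_iff hX).2 ⟨hG, hGX⟩),
    hX.restrict_closure_empty]

lemma charPoly_restrict (hX : M.IsFlat X) :
    charPoly (M ↾ X) = ∑ F ∈ flats M with ↑F ⊆ X,
      Polynomial.C (mob M F) * Polynomial.X ^ (mrk M X - mrk M ↑F) := by
  have hflats : flats (M ↾ X) = {F ∈ flats M | ↑F ⊆ X} := by
    rw [← subflats_restrict hX subset_rfl, Finset.filter_true_of_mem]
    exact fun F hF ↦ (mem_flats.1 hF).subset_ground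
  refine Finset.sum_congr hflats fun F hF ↦ ?_
  obtain ⟨hF, hFX⟩ := Finset.mem_filter.1 hF
  rw [mob_restrict hX (mem_flats.1 hF) hFX, restrict_ground_eq, mrk_restrict subset_rfl,
    mrk_restrict hFX]

end Mobius

section ModularCoatom

variable {M : Matroid α} [M.RankFinite] {X F g : Set α} {x : α}

lemma closure_union_eq_ground_of_not_subset (hmod : ModularFlat M X)
    (hcoatom : mrk M X + 1 = mrk M M.E) (hF : M.IsFlat F) (hFX : ¬ F ⊆ X) :
    M.closure (X ∪ F) = M.E := by
  obtain ⟨f, hfF, hfX⟩ := not_subset.1 hFX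
  have hXF : X ⊂ M.closure (X ∪ F) :=
    ssubset_of_subset_not_subset
      (M.subset_closure_of_subset' subset_union_left hmod.1.subset_ground)
      fun h ↦ hfX (h (M.mem_closure_of_mem' (Or.inr hfF) (hF.subset_ground hfF)))
  have hlt := hmod.1.mrk_lt_of_ssubset (isFlat_closure _) hXF
  exact (isFlat_closure _).eq_of_subset_of_mrk_le M.ground_isFlat (M.closure_subset_ground _)
    (by omega)

lemma mrk_eq_mrk_inter_add_one (hmod : ModularFlat M X) (hcoatom : mrk M X + 1 = mrk M M.E)
    (hF : M.IsFlat F) (hFX : ¬ F ⊆ X) : mrk M F = mrk M (X ∩ F) + 1 := by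
  have := hmod.2 F hF
  rw [closure_union_eq_ground_of_not_subset hmod hcoatom hF hFX] at this
  omega

lemma isFlat_inter_eq_and_mem_iff (hmod : ModularFlat M X) (hcoatom : mrk M X + 1 = mrk M M.E)
    (hg : M.IsFlat g) (hgX : g ⊆ X) (hx : x ∈ M.E \ X) :
    M.IsFlat F ∧ X ∩ F = g ∧ x ∈ F ↔ F = M.closure (insert x g) := by
  have hxg : x ∈ M.E \ g := ⟨hx.1, fun h ↦ hx.2 (hgX h)⟩
  have hrank := hg.mrk_closure_insert hxg
  have hxcl : x ∈ M.closure (insert x g) :=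
    M.mem_closure_of_mem' (mem_insert x g) hx.1
  constructor
  · rintro ⟨hF, rfl, hxF⟩
    have hrF := mrk_eq_mrk_inter_add_one hmod hcoatom hF fun h ↦ hx.2 (h hxF)
    exact ((isFlat_closure _).eq_of_subset_of_mrk_le hF
      (hF.closure_subset_of_subset (insert_subset hxF inter_subset_right)) (by omega)).symm
  · rintro rfl
    have hrX := mrk_eq_mrk_inter_add_one hmod hcoatom (isFlat_closure _) fun h ↦ hx.2 (h hxcl)
    refine ⟨isFlat_closure _, ?_, hxcl⟩
    refine (hg.eq_of_subset_of_mrk_le (hmod.1.inter (isFlat_closure _)) ?_ (by omega)).symm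
    exact subset_inter hgX ((subset_insert x g).trans
      (M.subset_closure _ (insert_subset hx.1 hg.subset_ground)))

end ModularCoatom

section Counting

open scoped Finset

variable [Fintype α] {M : Matroid α} {X : Set α} {G g : Finset α}

lemma coe_toFinset_inter (X : Set α) (F : Finset α) :
    ↑(X.toFinset ∩ F) = X ∩ (F : Set α) := by
  simp

lemma sum_card_sdiff_fiber (hmod : ModularFlat M X) (hcoatom : mrk M X + 1 = mrk M M.E)
    (hG : M.IsFlat ↑G) (hg : M.IsFlat ↑g) (hgG : g ⊆ X.toFinset ∩ G) :
    ∑ F ∈ {F ∈ flats M | F ⊆ G} with X.toFinset ∩ F = g, #(F \ X.toFinset) =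
      #(G \ X.toFinset) := by
  replace hgG : ↑g ⊆ X ∩ (G : Set α) := by rw [← coe_toFinset_inter]; exact_mod_cast hgG
  have hcard : ∀ F ∈ {F ∈ {F ∈ flats M | F ⊆ G} | X.toFinset ∩ F = g},
      #(F \ X.toFinset) = #((G \ X.toFinset) ∩ F) := fun F hF ↦ by
    obtain ⟨⟨-, hFG⟩, -⟩ := by simpa only [Finset.mem_filter] using hF
    congr 1
    ext y
    simp only [Finset.mem_sdiff, Finset.mem_inter]
    exact ⟨fun h ↦ ⟨⟨hFG h.1, h.2⟩, h.1⟩, fun h ↦ ⟨h.2, h.1.2⟩⟩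
  rw [Finset.sum_congr rfl hcard, Finset.sum_card_inter (n := 1), mul_one]
  intro x hx
  obtain ⟨hxG, hxX⟩ : x ∈ (G : Set α) ∧ x ∉ X := by simpa using hx
  refine Finset.card_eq_one.2 ⟨(M.closure (insert x g)).toFinset, Finset.ext fun F ↦ ?_⟩
  have hclG : M.closure (insert x ↑g) ⊆ G :=
    hG.closure_subset_of_subset (insert_subset hxG (hgG.trans inter_subset_right))
  rw [Finset.mem_singleton, ← Finset.coe_inj, coe_toFinset,
    ← isFlat_inter_eq_and_mem_iff hmod hcoatom hg (hgG.trans inter_subset_left)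
      ⟨hG.subset_ground hxG, hxX⟩]
  simp only [Finset.mem_filter, mem_flats, ← Finset.coe_inj, coe_toFinset_inter,
    Finset.mem_coe]
  constructor
  · rintro ⟨⟨⟨hF, -⟩, hXF⟩, hxF⟩
    exact ⟨hF, hXF, hxF⟩
  · rintro ⟨hF, hXF, hxF⟩
    refine ⟨⟨⟨hF, ?_⟩, hXF⟩, hxF⟩
    rw [← Finset.coe_subset, (isFlat_inter_eq_and_mem_iff hmod hcoatom hg
      (hgG.trans inter_subset_left) ⟨hG.subset_ground hxG, hxX⟩).1 ⟨hF, hXF, hxF⟩]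
    exact hclG

lemma sum_subflats_card_sdiff_nsmul {R : Type*} [AddCommMonoid R] (hmod : ModularFlat M X)
    (hcoatom : mrk M X + 1 = mrk M M.E) (φ : Finset α → R) (hG : M.IsFlat ↑G) :
    ∑ F ∈ flats M with F ⊆ G, #(F \ X.toFinset) • φ (X.toFinset ∩ F) =
      #(G \ X.toFinset) • ∑ g ∈ flats M with g ⊆ X.toFinset ∩ G, φ g := by
  have hmaps : ∀ F ∈ {F ∈ flats M | F ⊆ G},
      X.toFinset ∩ F ∈ {g ∈ flats M | g ⊆ X.toFinset ∩ G} := fun F hF ↦ by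
    obtain ⟨hF, hFG⟩ := Finset.mem_filter.1 hF
    rw [Finset.mem_filter, mem_flats, coe_toFinset_inter]
    exact ⟨hmod.1.inter (mem_flats.1 hF), Finset.inter_subset_inter_left hFG⟩
  rw [← Finset.sum_fiberwise_of_maps_to hmaps, Finset.smul_sum]
  refine Finset.sum_congr rfl fun g hg ↦ ?_
  obtain ⟨hg, hgG⟩ := Finset.mem_filter.1 hg
  calc _ = ∑ F ∈ {F ∈ flats M | F ⊆ G} with X.toFinset ∩ F = g,
          #(F \ X.toFinset) • φ g :=
        Finset.sum_congr rfl fun F hF ↦ by rw [(Finset.mem_filter.1 hF).2]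
    _ = #(G \ X.toFinset) • φ g := by
        rw [← Finset.sum_smul, sum_card_sdiff_fiber hmod hcoatom hG (mem_flats.1 hg) hgG]

end Counting

section CharPoly

open scoped Finset
open Polynomial (C)

variable [Fintype α] {M : Matroid α} {X : Set α} {F : Finset α}

lemma card_sdiff_eq_one_of_inter_eq_empty (hs : SimpleM M) (hmod : ModularFlat M X)
    (hcoatom : mrk M X + 1 = mrk M M.E) (hF : M.IsFlat ↑F) (hFX : ¬ ↑F ⊆ X)
    (hXF : X ∩ ↑F = ∅) : #(F \ X.toFinset) = 1 := by
  have hr : mrk M ↑F = 1 := by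
    rw [mrk_eq_mrk_inter_add_one hmod hcoatom hF hFX, hXF, mrk_empty]
  rw [← hs.ncard_eq_one_of_mrk_eq_one hF.subset_ground hr, ← Set.ncard_coe_finset,
    Finset.coe_sdiff, Set.coe_toFinset, sdiff_eq_left.2 (disjoint_iff_inter_eq_empty.2 hXF).symm]

lemma mob_eq_neg_card_mul_mob_inter (hs : SimpleM M) (hmod : ModularFlat M X)
    (hcoatom : mrk M X + 1 = mrk M M.E) (hF : M.IsFlat ↑F) (hFX : ¬ ↑F ⊆ X) :
    mob M F = -#(F \ X.toFinset) * mob M (X.toFinset ∩ F) := by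
  set f : Finset α → ℤ := fun G ↦
    if ↑G ⊆ X then mob M G else -#(G \ X.toFinset) * mob M (X.toFinset ∩ G)
  suffices f F = mob M F by simpa [f, hFX] using this.symm
  refine eq_mob_of_sum_subflats hF fun G hG _ ↦ ?_
  by_cases hGX : ↑G ⊆ X
  · rw [← sum_mob_subflats hG]
    refine Finset.sum_congr rfl fun H hH ↦ if_pos ?_
    exact (Finset.coe_subset.2 (Finset.mem_filter.1 hH).2).trans hGX
  have hG0 : ↑G ≠ M.closure ∅ := by
    rw [hs.closure_empty]
    rintro h
    exact hGX (h ▸ empty_subset X)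
  have hXG : M.IsFlat ↑(X.toFinset ∩ G) := by rw [coe_toFinset_inter]; exact hmod.1.inter hG
  have hinside : ∑ H ∈ flats M with H ⊆ G ∧ ↑H ⊆ X, f H =
      if ↑(X.toFinset ∩ G) = M.closure ∅ then 1 else 0 := by
    rw [← sum_mob_subflats hXG]
    refine Finset.sum_congr (Finset.filter_congr fun H _ ↦ ?_) fun H hH ↦ if_pos ?_
    · rw [Finset.subset_inter_iff, Set.subset_toFinset, and_comm]
    · exact Set.subset_toFinset.1 ((Finset.mem_filter.1 hH).2.trans Finset.inter_subset_left)
  have houtside : ∑ H ∈ flats M with H ⊆ G ∧ ¬ ↑H ⊆ X, f H =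
      -(#(G \ X.toFinset) * if ↑(X.toFinset ∩ G) = M.closure ∅ then 1 else 0) := calc
    _ = ∑ H ∈ {H ∈ flats M | H ⊆ G} with ¬ ↑H ⊆ X,
          -(#(H \ X.toFinset) • mob M (X.toFinset ∩ H)) := by
      rw [← Finset.filter_filter]
      refine Finset.sum_congr rfl fun H hH ↦ ?_
      simp only [f, if_neg (Finset.mem_filter.1 hH).2, nsmul_eq_mul, neg_mul]
    _ = ∑ H ∈ flats M with H ⊆ G, -(#(H \ X.toFinset) • mob M (X.toFinset ∩ H)) := by
      refine Finset.sum_filter_of_ne fun H _ hH hHX ↦ hH ?_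
      rw [Finset.sdiff_eq_empty_iff_subset.2 (Set.subset_toFinset.2 hHX)]
      simp
    _ = _ := by
      rw [Finset.sum_neg_distrib, sum_subflats_card_sdiff_nsmul hmod hcoatom (mob M) hG,
        sum_mob_subflats hXG, nsmul_eq_mul]
  rw [if_neg hG0, ← Finset.sum_filter_add_sum_filter_not _ (fun H : Finset α ↦ ↑H ⊆ X),
    Finset.filter_filter, Finset.filter_filter, hinside, houtside]
  split_ifs with hbot
  · have hXG : X ∩ ↑G = ∅ := by rw [← coe_toFinset_inter, hbot, hs.closure_empty]
    simp [card_sdiff_eq_one_of_inter_eq_empty hs hmod hcoatom hG hGX hXG]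
  · simp

lemma charPoly_eq_X_sub_C_mul (hs : SimpleM M) (hmod : ModularFlat M X)
    (hcoatom : mrk M X + 1 = mrk M M.E) :
    charPoly M = (Polynomial.X - C (((M.E \ X).ncard : ℤ))) * charPoly (M ↾ X) := by
  set term : ℕ → Finset α → Polynomial ℤ := fun n F ↦
    C (mob M F) * Polynomial.X ^ (n - mrk M ↑F)
  have hres : charPoly (M ↾ X) = ∑ g ∈ flats M with ↑g ⊆ X, term (mrk M X) g :=
    charPoly_restrict hmod.1
  have hinside : ∑ F ∈ flats M with ↑F ⊆ X, term (mrk M M.E) F =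
      Polynomial.X * charPoly (M ↾ X) := by
    rw [hres, Finset.mul_sum]
    refine Finset.sum_congr rfl fun F hF ↦ ?_
    have := mrk_mono (M := M) (Finset.mem_filter.1 hF).2
    simp only [term]
    rw [show mrk M M.E - mrk M ↑F = mrk M X - mrk M ↑F + 1 by omega, pow_succ]
    ring
  have houtside : ∑ F ∈ flats M with ¬ ↑F ⊆ X, term (mrk M M.E) F =
      -((M.E \ X).ncard • charPoly (M ↾ X)) := calc
    _ = ∑ F ∈ flats M with ¬ ↑F ⊆ X,
          -(#(F \ X.toFinset) • term (mrk M X) (X.toFinset ∩ F)) := by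
      refine Finset.sum_congr rfl fun F hF ↦ ?_
      obtain ⟨hF, hFX⟩ := Finset.mem_filter.1 hF
      have hr := mrk_eq_mrk_inter_add_one hmod hcoatom (mem_flats.1 hF) hFX
      simp only [term]
      rw [mob_eq_neg_card_mul_mob_inter hs hmod hcoatom (mem_flats.1 hF) hFX, coe_toFinset_inter,
        show mrk M M.E - mrk M ↑F = mrk M X - mrk M (X ∩ ↑F) by omega]
      simp [nsmul_eq_mul, mul_assoc]
    _ = ∑ F ∈ flats M, -(#(F \ X.toFinset) • term (mrk M X) (X.toFinset ∩ F)) := by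
      refine Finset.sum_filter_of_ne fun F _ hF hFX ↦ hF ?_
      rw [Finset.sdiff_eq_empty_iff_subset.2 (Set.subset_toFinset.2 hFX)]
      simp
    _ = _ := by
      have hE : M.IsFlat ↑M.E.toFinset := by simp
      have := sum_subflats_card_sdiff_nsmul hmod hcoatom (term (mrk M X)) hE
      rw [Finset.filter_true_of_mem fun F hF ↦ by simp [(mem_flats.1 hF).subset_ground],
        ← Set.toFinset_sdiff, ← Set.ncard_eq_toFinset_card'] at this
      rw [Finset.sum_neg_distrib, this, hres]
      congr 3
      refine Finset.filter_congr fun g _ ↦ ?_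
      rw [← Finset.coe_subset, coe_toFinset_inter, Set.coe_toFinset,
        inter_eq_left.2 hmod.1.subset_ground]
  rw [charPoly, ← flats, ← Finset.sum_filter_add_sum_filter_not _ fun F : Finset α ↦ ↑F ⊆ X,
    hinside, houtside, nsmul_eq_mul, map_natCast]
  ring

end CharPoly

theorem stmt19_general [Fintype α] (M : Matroid α) (hsimple : SimpleM M)
    {X : Set α} (hmod : ModularFlat M X) (hcoatom : mrk M X + 1 = mrk M M.E) :
    charPoly M =
        (Polynomial.X - Polynomial.C (((M.E \ X).ncard : ℤ))) * charPoly (M ↾ X) ∧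
      charPoly (M ↾ X) ∣ charPoly M :=
  have h := charPoly_eq_X_sub_C_mul hsimple hmod hcoatom
  ⟨h, Dvd.intro_left _ h.symm⟩

/-- For a modular coatom `X` of a simple matroid,
`χ(M, t) = (t - |E \ X|) · χ(M|X, t)`; in particular `χ(M|X, t)` divides `χ(M, t)`. -/
theorem stmt19 [Fintype α] (M : Matroid α) (hsimple : SimpleM M)
    {X : Set α} (hmod : ModularFlat M X) (hcoatom : mrk M X + 1 = mrk M M.E)
    {e : α} (he : e ∈ M.E \ X) :
    charPoly M =
        (Polynomial.X - Polynomial.C (((M.E \ X).ncard : ℤ))) * charPoly (M ↾ X) ∧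
      charPoly (M ↾ X) ∣ charPoly M :=
  stmt19_general M hsimple hmod hcoatom

end Paper
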